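/- arXiv:1903.04857 — 3 statements merged into one kernel-verified Lean document; each statement's English description precedes it below -/
import Mathlib

section
/- For any real constants a, φ, x₀, the function u(x,t) = √2 · a · e^{a(x + a²t - x₀)} · e^{iφ} / (1 + e^{2a(x + a²t - x₀)}) satisfies the Sasa–Satsuma equation u_t - u_{xxx} - 6|u|²u_x - 3u(|u|²)_x = 0 for all (x,t) ∈ ℝ². -/
open Complex Matrix ComplexConjugate

/-!
The soliton is a traveling wave `c · p(a x + a³ t - a x₀)` with amplitude `c = √2 a e^{iφ}`,
so `|c|² = 2a²`, and real profile `p = sech / 2`. For a wave `c · g(k x + ω t + b)` with real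
profile the Sasa–Satsuma equation collapses to the ODE `ω g' - k³ g''' - 12 |c|² k g² g' = 0`,
which for the soliton reads `p''' = p' - 24 p² p'`: the derivative of `p'' = p - 8 p³`,
itself a consequence of `cosh² - sinh² = 1`.
-/

noncomputable section

def ux (u : ℝ → ℝ → ℂ) (x t : ℝ) : ℂ := deriv (fun x' => u x' t) x

def ut (u : ℝ → ℝ → ℂ) (x t : ℝ) : ℂ := deriv (fun t' => u x t') t

def soliton (a φ x₀ : ℝ) : ℝ → ℝ → ℂ := fun x t =>
  (Real.sqrt 2 * a : ℝ) * Complex.exp ((a * (x + a ^ 2 * t - x₀) : ℝ) : ℂ) *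
      Complex.exp (Complex.I * (φ : ℂ)) /
    (1 + Complex.exp ((2 * a * (x + a ^ 2 * t - x₀) : ℝ) : ℂ))

def sasaSatsuma (u : ℝ → ℝ → ℂ) (x t : ℝ) : ℂ :=
  ut u x t - ux (ux (ux u)) x t - 6 * (normSq (u x t) : ℂ) * ux u x t -
    3 * u x t * (u x t * conj (ux u x t) + ux u x t * conj (u x t))

def travelingWave (c : ℂ) (k ω b : ℝ) (g : ℝ → ℝ) : ℝ → ℝ → ℂ :=
  fun x t => c * (g (k * x + ω * t + b) : ℂ)

section TravelingWave

variable {g g' g'' g''' : ℝ → ℝ} (c : ℂ) (k ω b : ℝ)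

theorem ux_travelingWave (hg : ∀ s, HasDerivAt g (g' s) s) :
    ux (travelingWave c k ω b g) = travelingWave (c * k) k ω b g' := by
  funext x t
  have hphase : HasDerivAt (fun x' : ℝ => k * x' + ω * t + b) k x := by
    simpa using (((hasDerivAt_id x).const_mul k).add_const (ω * t)).add_const b
  refine ((((hg _).comp x hphase).ofReal_comp).const_mul c).deriv.trans ?_
  rw [travelingWave]
  push_cast
  ring

theorem ut_travelingWave (hg : ∀ s, HasDerivAt g (g' s) s) :
    ut (travelingWave c k ω b g) = travelingWave (c * ω) k ω b g' := by
  funext x t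
  have hphase : HasDerivAt (fun t' : ℝ => k * x + ω * t' + b) ω t := by
    simpa using (((hasDerivAt_id t).const_mul ω).const_add (k * x)).add_const b
  refine ((((hg _).comp t hphase).ofReal_comp).const_mul c).deriv.trans ?_
  rw [travelingWave]
  push_cast
  ring

theorem sasaSatsuma_travelingWave (hg : ∀ s, HasDerivAt g (g' s) s)
    (hg' : ∀ s, HasDerivAt g' (g'' s) s) (hg'' : ∀ s, HasDerivAt g'' (g''' s) s) :
    sasaSatsuma (travelingWave c k ω b g) = travelingWave c k ω b
      (fun s => ω * g' s - k ^ 3 * g''' s - 12 * normSq c * k * g s ^ 2 * g' s) := by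
  funext x t
  simp only [sasaSatsuma, ut_travelingWave c k ω b hg, ux_travelingWave _ k ω b hg,
    ux_travelingWave _ k ω b hg', ux_travelingWave _ k ω b hg'', travelingWave, normSq_ofReal,
    map_mul, conj_ofReal]
  push_cast
  generalize k * x + ω * t + b = s
  linear_combination (-6 * k * g s ^ 2 * g' s * c) * mul_conj c

end TravelingWave

def halfSech (s : ℝ) : ℝ := (2 * Real.cosh s)⁻¹

theorem hasDerivAt_halfSech (s : ℝ) :
    HasDerivAt halfSech (-Real.sinh s / (2 * Real.cosh s ^ 2)) s := by
  have hcosh := Real.cosh_pos s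
  refine (((Real.hasDerivAt_cosh s).const_mul 2).inv (by positivity)).congr_deriv ?_
  field_simp

theorem hasDerivAt_halfSech_deriv (s : ℝ) :
    HasDerivAt (fun s => -Real.sinh s / (2 * Real.cosh s ^ 2))
      (halfSech s - 8 * halfSech s ^ 3) s := by
  have hcosh := Real.cosh_pos s
  refine ((Real.hasDerivAt_sinh s).neg.div (((Real.hasDerivAt_cosh s).pow 2).const_mul 2)
    (by simp only [Pi.pow_apply]; positivity)).congr_deriv ?_
  simp only [halfSech, Pi.pow_apply, Pi.neg_apply]
  field_simp
  norm_num
  linear_combination (-8 * Real.cosh s) * Real.cosh_sq s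

theorem hasDerivAt_halfSech_deriv_deriv (s : ℝ) :
    HasDerivAt (fun s => halfSech s - 8 * halfSech s ^ 3)
      ((1 - 24 * halfSech s ^ 2) * (-Real.sinh s / (2 * Real.cosh s ^ 2))) s := by
  refine ((hasDerivAt_halfSech s).sub
    (((hasDerivAt_halfSech s).pow 3).const_mul 8)).congr_deriv ?_
  push_cast
  ring

theorem soliton_eq_travelingWave (a φ x₀ : ℝ) :
    soliton a φ x₀ =
      travelingWave ((Real.sqrt 2 * a : ℝ) * exp (I * φ)) a (a ^ 3) (-(a * x₀)) halfSech := by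
  funext x t
  have hphase : a * x + a ^ 3 * t + -(a * x₀) = a * (x + a ^ 2 * t - x₀) := by ring
  simp only [soliton, travelingWave, hphase, mul_assoc 2 a]
  generalize a * (x + a ^ 2 * t - x₀) = s
  have hprofile : Real.exp s / (1 + Real.exp (2 * s)) = halfSech s := by
    rw [halfSech, Real.cosh_eq, Real.exp_neg, two_mul, Real.exp_add]
    field_simp
    ring
  rw [← hprofile]
  push_cast
  ring

theorem normSq_soliton_amplitude (a φ : ℝ) :
    normSq ((Real.sqrt 2 * a : ℝ) * exp (I * φ)) = 2 * a ^ 2 := by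
  rw [normSq_eq_norm_sq, norm_mul, norm_exp_I_mul_ofReal, norm_real, Real.norm_eq_abs, mul_one,
    sq_abs, mul_pow, Real.sq_sqrt zero_le_two]

/-- For any real constants `a, φ, x₀`, the one-soliton
`u(x,t) = √2·a·e^{a(x+a²t-x₀)}·e^{iφ}/(1+e^{2a(x+a²t-x₀)})` satisfies the Sasa–Satsuma
equation `u_t - u_{xxx} - 6|u|²u_x - 3u(|u|²)_x = 0` for all `(x,t) ∈ ℝ²`. -/
theorem soliton_solves_sasa_satsuma (a φ x₀ : ℝ) :
    ∀ x t : ℝ,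
      ut (soliton a φ x₀) x t - ux (ux (ux (soliton a φ x₀))) x t -
        6 * (Complex.normSq (soliton a φ x₀ x t) : ℂ) * ux (soliton a φ x₀) x t -
        3 * soliton a φ x₀ x t *
          (soliton a φ x₀ x t * conj (ux (soliton a φ x₀) x t) +
            ux (soliton a φ x₀) x t * conj (soliton a φ x₀ x t)) = 0 := by
  intro x t
  change sasaSatsuma (soliton a φ x₀) x t = 0
  rw [soliton_eq_travelingWave, sasaSatsuma_travelingWave _ _ _ _ hasDerivAt_halfSech
    hasDerivAt_halfSech_deriv hasDerivAt_halfSech_deriv_deriv, travelingWave,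
    normSq_soliton_amplitude]
  push_cast
  ring
end
end

section
/- Let m₁ ∈ M₃(ℂ) satisfy m₁ = -m₁† and m₁ = -𝒜 · conj(m₁) · 𝒜, and set u = 2i·(m₁)₁₃. Then i·(Λ·m₁ - m₁·Λ) = U(u); that is, the commutator identity U(u) = i[Λ, m₁] holds, where U(u) is the 3×3 matrix with rows (0,0,u), (0,0,conj u), (-conj u, -u, 0). -/
open Complex Matrix ComplexConjugate

noncomputable section

/-- The diagonal matrix `Λ = diag(1,1,-1)`. -/
def Lam : Matrix (Fin 3) (Fin 3) ℂ := !![1, 0, 0; 0, 1, 0; 0, 0, -1]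

/-- The permutation matrix `𝒜`. -/
def Amat : Matrix (Fin 3) (Fin 3) ℂ := !![0, 1, 0; 1, 0, 0; 0, 0, 1]

/-- The matrix `U(u)`. -/
def Umat (u : ℂ) : Matrix (Fin 3) (Fin 3) ℂ :=
  !![0, 0, u; 0, 0, conj u; -conj u, -u, 0]

/-- If `m₁ = -m₁†` and `m₁ = -𝒜·conj(m₁)·𝒜`, and `u = 2i·(m₁)₁₃`, then `U(u) = i[Λ, m₁]`. -/
theorem commutator_identity (m₁ : Matrix (Fin 3) (Fin 3) ℂ)
    (h1 : m₁ = -m₁.conjTranspose)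
    (h2 : m₁ = -(Amat * m₁.map (starRingEnd ℂ) * Amat)) :
    Complex.I • (Lam * m₁ - m₁ * Lam) = Umat (2 * Complex.I * m₁ 0 2) := by
  have e1 : m₁ 2 0 = -conj (m₁ 0 2) := by
    have := congrFun (congrFun h1 2) 0; simpa using this
  have e2 : m₁ 1 2 = -conj (m₁ 0 2) := by
    have := congrFun (congrFun h2 1) 2
    simpa [Amat, Matrix.mul_apply, Fin.sum_univ_three, Matrix.map_apply,
      Matrix.vecMul, dotProduct, Matrix.vecHead, Matrix.vecTail] using this
  have e3 : m₁ 2 1 = m₁ 0 2 := by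
    have := congrFun (congrFun h1 2) 1
    simp only [Matrix.neg_apply, Matrix.conjTranspose_apply] at this
    rw [this, e2]
    simp
  ext i j
  fin_cases i <;> fin_cases j <;>
    simp [Lam, Umat, Matrix.mul_apply, Fin.sum_univ_three, Matrix.vecMul,
      dotProduct, Matrix.vecHead, Matrix.vecTail, map_ofNat, e1, e2, e3] <;>
    ring
end
end

section
/- Let r, α : ℝ → ℝ be twice differentiable with r(y) > 0 for all y, suppose 2·r'(y)·α'(y) + r(y)·α''(y) = 0 for all y ∈ ℝ, and suppose r(y)²·α'(y) → 0 as y → -∞. Then α'(y) = 0 for all y ∈ ℝ, i.e. α is constant, so the function ψ(y) = r(y)·e^{iα(y)} has constant phase. -/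
open Filter

noncomputable section

/-- If `2r'α' + rα'' = 0` on `ℝ` with `r > 0`, and `r²α' → 0` as `y → -∞`, then `α' ≡ 0`,
i.e. `α` is constant, so `ψ = r·e^{iα}` has constant phase. -/
theorem constant_phase (r α : ℝ → ℝ)
    (hr : Differentiable ℝ r)
    (hα : Differentiable ℝ α) (hα' : Differentiable ℝ (deriv α))
    (hpos : ∀ y : ℝ, 0 < r y)
    (heq : ∀ y : ℝ, 2 * deriv r y * deriv α y + r y * deriv (deriv α) y = 0)
    (hlim : Tendsto (fun y : ℝ => r y ^ 2 * deriv α y) atBot (nhds 0)) :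
    (∀ y : ℝ, deriv α y = 0) ∧ (∀ y₁ y₂ : ℝ, α y₁ = α y₂) := by
  set f : ℝ → ℝ := fun y => r y ^ 2 * deriv α y with hf
  have hderiv : ∀ y : ℝ, HasDerivAt f 0 y := by
    intro y
    have h1 : HasDerivAt (fun y => r y ^ 2) (2 * r y ^ 1 * deriv r y) y :=
      ((hr y).hasDerivAt.pow 2)
    have h2 : HasDerivAt (deriv α) (deriv (deriv α) y) y := (hα' y).hasDerivAt
    have := h1.mul h2
    have key : 2 * r y ^ 1 * deriv r y * deriv α y + r y ^ 2 * deriv (deriv α) y = 0 := by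
      have h := heq y
      have e : 2 * r y ^ 1 * deriv r y * deriv α y + r y ^ 2 * deriv (deriv α) y
          = r y * (2 * deriv r y * deriv α y + r y * deriv (deriv α) y) := by ring
      rw [e, h, mul_zero]
    rw [key] at this
    exact this
  have hconst : ∀ y : ℝ, f y = f 0 := by
    intro y
    have := is_const_of_deriv_eq_zero (f := f)
      (fun y => (hderiv y).differentiableAt) (fun y => (hderiv y).deriv) y 0
    exact this
  have hf0 : f 0 = 0 := by
    have he : f = fun _ : ℝ => f 0 := funext hconst
    rw [he] at hlim
    exact tendsto_nhds_unique tendsto_const_nhds hlim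
  have hd0 : ∀ y : ℝ, deriv α y = 0 := by
    intro y
    have h := hconst y
    rw [hf0] at h
    have hr2 : r y ^ 2 ≠ 0 := pow_ne_zero 2 (hpos y).ne'
    exact (mul_eq_zero.mp h).resolve_left hr2
  refine ⟨hd0, fun y₁ y₂ => ?_⟩
  exact is_const_of_deriv_eq_zero hα hd0 y₁ y₂
end
end
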